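/- Mixed update/downdate: Let X₁ be m×n₁ with sample covariance S₁, let Y_d be an m×k_d submatrix of columns of X₁, let Y_u be an m×k_u matrix, and let X₂ (m×n₂, n₂ = n₁ + k_u − k_d) be formed by removing the columns Y_d from X₁ and appending the columns of Y_u; let S₂ be the sample covariance of X₂ and x̄₁, x̄₂ the column means of X₁, X₂. Then (n₂−1)·S₂ = (n₁−1)·S₁ + (Y_u − x̄₁·1_{k_u}ᵀ)(Y_u − x̄₂·1_{k_u}ᵀ)ᵀ − (Y_d − x̄₁·1_{k_d}ᵀ)(Y_d − x̄₂·1_{k_d}ᵀ)ᵀ. -/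

import Mathlib

/-!
The product `(Z - a1ᵀ)(W - b1ᵀ)ᵀ` is unchanged when `a` is replaced by any other vector, provided
each row of `W - b1ᵀ` sums to zero (i.e. `b` is the mean of `W`), and symmetrically in `b`. So both
scatter matrices `(nᵢ - 1)Sᵢ` can be written with the left factor centred at `x̄₁` and the right
one at `x̄₂`. In this mixed form a scatter matrix is additive over columns, and the scatter
matrices of `X₂` and `X₁` differ by exactly the contributions of `Yu` and `Yd`.
-/
open Matrix

/-- Sample covariance (with Bessel's correction) of an m×N data matrix. -/
noncomputable def sampleCov {m : ℕ} {ι : Type*} [Fintype ι]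
    (Z : Matrix (Fin m) ι ℝ) : Matrix (Fin m) (Fin m) ℝ :=
  ((Fintype.card ι : ℝ) - 1)⁻¹ •
    ((Matrix.of fun i j => Z i j - (∑ l, Z i l) / (Fintype.card ι : ℝ)) *
      (Matrix.of fun i j => Z i j - (∑ l, Z i l) / (Fintype.card ι : ℝ))ᵀ)

namespace Matrix

variable {κ ι ι' : Type*}

def centerCols (Z : Matrix κ ι ℝ) (c : κ → ℝ) : Matrix κ ι ℝ :=
  Matrix.of fun i j => Z i j - c i

noncomputable def colMean [Fintype ι] (Z : Matrix κ ι ℝ) : κ → ℝ :=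
  fun i => (∑ j, Z i j) / Fintype.card ι

lemma centerCols_submatrix (Z : Matrix κ ι ℝ) (c : κ → ℝ) (f : ι' → ι) :
    centerCols (Z.submatrix id f) c = (centerCols Z c).submatrix id f :=
  rfl

lemma centerCols_fromCols (A : Matrix κ ι ℝ) (B : Matrix κ ι' ℝ) (c : κ → ℝ) :
    centerCols (fromCols A B) c = fromCols (centerCols A c) (centerCols B c) := by
  ext i (j | j) <;> rfl

variable [Fintype ι]

lemma sum_centerCols_colMean (Z : Matrix κ ι ℝ) (i : κ) :
    ∑ j, centerCols Z (colMean Z) i j = 0 := by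
  rcases isEmpty_or_nonempty ι with _ | _
  · exact Finset.sum_of_isEmpty _
  simp only [centerCols, colMean, of_apply, Finset.sum_sub_distrib, Finset.sum_const,
    Finset.card_univ, nsmul_eq_mul]
  rw [mul_div_cancel₀ _ (by positivity), sub_self]

lemma centerCols_colMean_of_card_eq_one (Z : Matrix κ ι ℝ) (h : Fintype.card ι = 1) :
    centerCols Z (colMean Z) = 0 := by
  obtain ⟨_⟩ := Fintype.card_eq_one_iff_nonempty_unique.mp h
  ext i j
  simpa [Subsingleton.elim j default] using sum_centerCols_colMean Z i

lemma smul_sampleCov {m : ℕ} (Z : Matrix (Fin m) ι ℝ) :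
    ((Fintype.card ι : ℝ) - 1) • sampleCov Z =
      centerCols Z (colMean Z) * (centerCols Z (colMean Z))ᵀ := by
  by_cases h : Fintype.card ι = 1
  -- `sampleCov` divides by `0` here, but a single centred column is `0` as well.
  · simp [centerCols_colMean_of_card_eq_one Z h, h]
  · rw [sampleCov, smul_smul, mul_inv_cancel₀ (sub_ne_zero.mpr (by exact_mod_cast h)), one_smul]
    rfl

lemma centerCols_mul_transpose_of_sum_eq_zero (Z W : Matrix κ ι ℝ) (c : κ → ℝ)
    (hW : ∀ k, ∑ j, W k j = 0) : centerCols Z c * Wᵀ = Z * Wᵀ := by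
  ext i k
  simp [centerCols, mul_apply, sub_mul, Finset.sum_sub_distrib, ← Finset.mul_sum, hW]

lemma mul_transpose_centerCols_of_sum_eq_zero (Z W : Matrix κ ι ℝ) (c : κ → ℝ)
    (hW : ∀ i, ∑ j, W i j = 0) : W * (centerCols Z c)ᵀ = W * Zᵀ := by
  rw [← transpose_transpose (W * Zᵀ), transpose_mul, transpose_transpose,
    ← centerCols_mul_transpose_of_sum_eq_zero Z W c hW, transpose_mul, transpose_transpose]

lemma mul_transpose_eq_add_compl [DecidableEq ι] (A B : Matrix κ ι ℝ) (J : Finset ι) :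
    A * Bᵀ =
      A.submatrix id (Subtype.val : {j // j ∈ J} → ι) *
          (B.submatrix id (Subtype.val : {j // j ∈ J} → ι))ᵀ +
        A.submatrix id (Subtype.val : {j // j ∉ J} → ι) *
          (B.submatrix id (Subtype.val : {j // j ∉ J} → ι))ᵀ := by
  ext i k
  simp only [add_apply, mul_apply, transpose_apply, submatrix_apply, id_eq]
  convert (Fintype.sum_subtype_add_sum_subtype (· ∈ J) fun j => A i j * B k j).symm

lemma fromCols_mul_transpose_fromCols [Fintype ι'] (A C : Matrix κ ι ℝ) (B D : Matrix κ ι' ℝ) :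
    fromCols A B * (fromCols C D)ᵀ = A * Cᵀ + B * Dᵀ := by
  rw [transpose_fromCols, fromCols_mul_fromRows]

lemma centerCols_mul_transpose_fromCols_compl [DecidableEq ι] [Fintype ι'] (X : Matrix κ ι ℝ)
    (J : Finset ι) (Y : Matrix κ ι' ℝ) (a b : κ → ℝ)
    (ha : ∀ i, ∑ j, centerCols X a i j = 0)
    (hb : ∀ i, ∑ j, centerCols (fromCols (X.submatrix id (Subtype.val : {j // j ∉ J} → ι)) Y) b i j
      = 0) :
    let X' := fromCols (X.submatrix id (Subtype.val : {j // j ∉ J} → ι)) Y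
    let Xd := X.submatrix id (Subtype.val : {j // j ∈ J} → ι)
    centerCols X' b * (centerCols X' b)ᵀ =
      centerCols X a * (centerCols X a)ᵀ + centerCols Y a * (centerCols Y b)ᵀ -
        centerCols Xd a * (centerCols Xd b)ᵀ := by
  intro X' Xd
  have hX' : centerCols X' b * (centerCols X' b)ᵀ = centerCols X' a * (centerCols X' b)ᵀ := by
    rw [centerCols_mul_transpose_of_sum_eq_zero _ _ _ hb,
      centerCols_mul_transpose_of_sum_eq_zero _ _ _ hb]
  have hX : centerCols X a * (centerCols X a)ᵀ = centerCols X a * (centerCols X b)ᵀ := by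
    rw [mul_transpose_centerCols_of_sum_eq_zero _ _ _ ha,
      mul_transpose_centerCols_of_sum_eq_zero _ _ _ ha]
  rw [hX', hX, centerCols_fromCols, centerCols_fromCols, fromCols_mul_transpose_fromCols,
    mul_transpose_eq_add_compl _ _ J]
  simp only [Xd, centerCols_submatrix]
  abel

end Matrix

lemma card_compl_sum_fin {n k : ℕ} (J : Finset (Fin n)) :
    (Fintype.card ({j // j ∉ J} ⊕ Fin k) : ℝ) = n + k - J.card := by
  rw [Fintype.card_sum, Fintype.card_subtype_compl, Fintype.card_coe, Fintype.card_fin,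
    Fintype.card_fin, Nat.cast_add, Nat.cast_sub (J.card_le_univ.trans_eq (Fintype.card_fin n))]
  ring

theorem mixed_update_downdate_general {m n₁ ku kd : ℕ}
    (X₁ : Matrix (Fin m) (Fin n₁) ℝ) (J : Finset (Fin n₁)) (hJ : J.card = kd)
    (Yd : Matrix (Fin m) {j // j ∈ J} ℝ) (hYd : Yd = X₁.submatrix id Subtype.val)
    (Yu : Matrix (Fin m) (Fin ku) ℝ)
    (X₂ : Matrix (Fin m) ({j // j ∉ J} ⊕ Fin ku) ℝ)
    (hX₂ : X₂ = Matrix.fromCols (X₁.submatrix id Subtype.val) Yu)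
    (xbar₁ xbar₂ : Fin m → ℝ)
    (hxbar₁ : ∀ i, xbar₁ i = (∑ j, X₁ i j) / (n₁ : ℝ))
    (hxbar₂ : ∀ i, xbar₂ i = (∑ j, X₂ i j) / ((n₁ : ℝ) + ku - kd)) :
    ((n₁ : ℝ) + ku - kd - 1) • sampleCov X₂ =
      ((n₁ : ℝ) - 1) • sampleCov X₁ +
        (Matrix.of fun i (j : Fin ku) => Yu i j - xbar₁ i) *
          (Matrix.of fun i (j : Fin ku) => Yu i j - xbar₂ i)ᵀ -
        (Matrix.of fun i (j : {j // j ∈ J}) => Yd i j - xbar₁ i) *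
          (Matrix.of fun i (j : {j // j ∈ J}) => Yd i j - xbar₂ i)ᵀ := by
  have hcard : (Fintype.card ({j // j ∉ J} ⊕ Fin ku) : ℝ) = n₁ + ku - kd := by
    rw [card_compl_sum_fin, hJ]
  have hx₁ : xbar₁ = colMean X₁ := funext fun i => by rw [hxbar₁, colMean, Fintype.card_fin]
  have hx₂ : xbar₂ = colMean X₂ := funext fun i => by rw [hxbar₂, colMean, hcard]
  have hS₁ := smul_sampleCov X₁
  rw [Fintype.card_fin] at hS₁
  rw [← hcard, smul_sampleCov, hS₁, ← hx₁, ← hx₂]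
  subst hYd hX₂
  exact centerCols_mul_transpose_fromCols_compl X₁ J Yu xbar₁ xbar₂
    (hx₁ ▸ sum_centerCols_colMean X₁) (hx₂ ▸ sum_centerCols_colMean _)

/-- Mixed update/downdate of the sample covariance matrix. -/
theorem mixed_update_downdate {m n₁ ku kd : ℕ}
    (hn₁ : 2 ≤ n₁) (hkd : kd < n₁) (hn₂ : 2 ≤ n₁ + ku - kd)
    (X₁ : Matrix (Fin m) (Fin n₁) ℝ) (J : Finset (Fin n₁)) (hJ : J.card = kd)
    (Yd : Matrix (Fin m) {j // j ∈ J} ℝ) (hYd : Yd = X₁.submatrix id Subtype.val)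
    (Yu : Matrix (Fin m) (Fin ku) ℝ)
    (X₂ : Matrix (Fin m) ({j // j ∉ J} ⊕ Fin ku) ℝ)
    (hX₂ : X₂ = Matrix.fromCols (X₁.submatrix id Subtype.val) Yu)
    (xbar₁ xbar₂ : Fin m → ℝ)
    (hxbar₁ : ∀ i, xbar₁ i = (∑ j, X₁ i j) / (n₁ : ℝ))
    (hxbar₂ : ∀ i, xbar₂ i = (∑ j, X₂ i j) / ((n₁ : ℝ) + ku - kd)) :
    ((n₁ : ℝ) + ku - kd - 1) • sampleCov X₂ =
      ((n₁ : ℝ) - 1) • sampleCov X₁ +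
        (Matrix.of fun i (j : Fin ku) => Yu i j - xbar₁ i) *
          (Matrix.of fun i (j : Fin ku) => Yu i j - xbar₂ i)ᵀ -
        (Matrix.of fun i (j : {j // j ∈ J}) => Yd i j - xbar₁ i) *
          (Matrix.of fun i (j : {j // j ∈ J}) => Yd i j - xbar₂ i)ᵀ :=
  mixed_update_downdate_general X₁ J hJ Yd hYd Yu X₂ hX₂ xbar₁ xbar₂ hxbar₁ hxbar₂
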